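/- For every integer n ≥ 3, the sum over i = 1 to n−2 of sin((i+1)π/n) / sin(iπ/n) equals (n−1)·cos(π/n). -/

import Mathlib

/-! With `x = π / n`, the addition formula turns each summand into `cos x + sin x * cot (i x)`.
The cotangents `cot (i π / n)`, `1 ≤ i ≤ n - 1`, cancel in pairs under `i ↦ n - i`, so those with
`i ≤ n - 2` add up to `cot x`, and `sin x * cot x = cos x` supplies the last copy of `cos x`. -/

open Real Finset

lemma Real.cot_pi_sub (x : ℝ) : cot (π - x) = -cot x := by
  rw [cot_eq_cos_div_sin, cot_eq_cos_div_sin, sin_pi_sub, cos_pi_sub, neg_div]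

lemma Real.sin_add_div_sin {x : ℝ} (hx : sin x ≠ 0) (y : ℝ) :
    sin (x + y) / sin x = cos y + sin y * cot x := by
  rw [sin_add, cot_eq_cos_div_sin]
  field_simp

lemma Real.sin_nat_mul_pi_div_pos {n i : ℕ} (hi : 0 < i) (hin : i < n) :
    0 < sin (i * π / n) := by
  have hi' : (0 : ℝ) < i := by exact_mod_cast hi
  have hin' : (i : ℝ) < n := by exact_mod_cast hin
  apply sin_pos_of_pos_of_lt_pi
  · exact div_pos (mul_pos hi' pi_pos) (hi'.trans hin')
  · rw [div_lt_iff₀ (hi'.trans hin')]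
    nlinarith [pi_pos]

lemma Real.sum_cot_nat_mul_pi_div_eq_zero (n : ℕ) :
    ∑ i ∈ Icc 1 (n - 1), cot (i * π / n) = 0 := by
  have reflect : ∑ i ∈ Icc 1 (n - 1), cot (i * π / n) =
      ∑ i ∈ Icc 1 (n - 1), -cot (i * π / n) := by
    refine sum_nbij' (n - ·) (n - ·) ?_ ?_ ?_ ?_ ?_ <;> intro i hi <;> rw [mem_Icc] at hi
    · rw [mem_Icc]; omega
    · rw [mem_Icc]; omega
    · omega
    · omega
    · have hn : (n : ℝ) ≠ 0 := by norm_cast; omega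
      have : ((n - i : ℕ) : ℝ) * π / n = π - i * π / n := by
        rw [Nat.cast_sub (by omega)]
        field_simp
      rw [this, cot_pi_sub, neg_neg]
  rw [sum_neg_distrib] at reflect
  linarith

lemma Real.sum_cot_nat_mul_pi_div_Icc_sub_two {n : ℕ} (hn : 2 ≤ n) :
    ∑ i ∈ Icc 1 (n - 2), cot (i * π / n) = cot (π / n) := by
  have hsplit : Icc 1 (n - 1) = insert (n - 1) (Icc 1 (n - 2)) := by
    ext
    simp only [mem_Icc, mem_insert]
    omega
  have hlast : cot ((n - 1 : ℕ) * π / n) = -cot (π / n) := by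
    have hn : (n : ℝ) ≠ 0 := by norm_cast; omega
    rw [Nat.cast_sub (by omega), Nat.cast_one, ← cot_pi_sub]
    congr 1
    field_simp
  have hzero := sum_cot_nat_mul_pi_div_eq_zero n
  rw [hsplit, sum_insert (by simp only [mem_Icc]; omega), hlast] at hzero
  linarith

theorem sum_sin_ratio_succ_eq (n : ℕ) (hn : 3 ≤ n) :
    ∑ i ∈ Finset.Icc 1 (n - 2),
      Real.sin ((i + 1) * Real.pi / n) / Real.sin (i * Real.pi / n) =
      (n - 1 : ℝ) * Real.cos (Real.pi / n) := by
  have hterm : ∀ i ∈ Icc 1 (n - 2), sin ((i + 1) * π / n) / sin (i * π / n) =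
      cos (π / n) + sin (π / n) * cot (i * π / n) := by
    intro i hi
    rw [mem_Icc] at hi
    rw [add_mul, add_div, one_mul,
      sin_add_div_sin (sin_nat_mul_pi_div_pos (by omega) (by omega)).ne']
  have hsin : sin (π / n) ≠ 0 := by
    simpa using (sin_nat_mul_pi_div_pos (i := 1) one_pos (by omega)).ne'
  rw [sum_congr rfl hterm, sum_add_distrib, sum_const, ← mul_sum,
    sum_cot_nat_mul_pi_div_Icc_sub_two (by omega), cot_eq_cos_div_sin, mul_div_cancel₀ _ hsin,
    Nat.card_Icc, Nat.add_sub_cancel, nsmul_eq_mul, Nat.cast_sub (by omega)]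
  push_cast
  ring
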